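/- Let F : P(ℝ^d) → ℝ be convex, of class C^1 and bounded from below, let σ > 0, and let m* be the (unique) minimizer of V^σ over P(ℝ^d). Then Z := ∫_{ℝ^d} exp(−(2/σ²)(δF/δm)(m*,y) − U(y)) dy ∈ (0,∞) and the density of m* is given, for Lebesgue-a.e. x ∈ ℝ^d, by m*(x) = Z^{−1} exp(−(2/σ²)(δF/δm)(m*,x) − U(x)). -/

import Mathlib

open MeasureTheory Real Filter Topology
open scoped ENNReal NNReal RealInnerProductSpace

noncomputable section

/-- Euclidean space `ℝ^d`. -/
abbrev Rd (d : ℕ) : Type := EuclideanSpace ℝ (Fin d)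

/-- Borel probability measures. -/
abbrev PM (α : Type*) [MeasurableSpace α] := MeasureTheory.ProbabilityMeasure α

/-- Finite second moment, i.e. membership in `P₂`. -/
def P2 {α : Type*} [MeasurableSpace α] [NormedAddCommGroup α] (μ : PM α) : Prop :=
  Integrable (fun x => ‖x‖ ^ 2) (μ : Measure α)

/-- The convex combination `(1-λ)·μ + λ·ν` of probability measures (with `λ` clamped
to `[0,1]`, which is the only range in which it is ever used). -/
def convComb {α : Type*} [MeasurableSpace α] (lam : ℝ) (μ ν : PM α) : PM α :=
  ⟨(ENNReal.ofReal (1 - max 0 (min lam 1))) • (μ : Measure α)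
      + (ENNReal.ofReal (max 0 (min lam 1))) • (ν : Measure α), by
    have ht0 : 0 ≤ max 0 (min lam 1) := le_max_left _ _
    have ht1 : max 0 (min lam 1) ≤ 1 := max_le zero_le_one (min_le_right _ _)
    constructor
    simp only [Measure.coe_add, Measure.coe_smul, Pi.add_apply, Pi.smul_apply,
      measure_univ, smul_eq_mul, mul_one]
    rw [← ENNReal.ofReal_add (by linarith) ht0]
    norm_num⟩

/-- `F` is of class `C¹` on the space of probability measures, with linear functional
derivative `DF`. -/
structure IsC1 {α : Type*} [MeasurableSpace α] [TopologicalSpace α] [OpensMeasurableSpace α]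
    (F : PM α → ℝ) (DF : PM α → α → ℝ) : Prop where
  bounded : ∃ C, ∀ m x, |DF m x| ≤ C
  cont : Continuous fun p : PM α × α => DF p.1 p.2
  deriv_eq : ∀ m m' : PM α,
    F m' - F m = ∫ lam in (0:ℝ)..1,
      (∫ x, DF (convComb lam m m') x ∂(m' : Measure α)
        - ∫ x, DF (convComb lam m m') x ∂(m : Measure α))

/-- Convexity of a function of probability measures. -/
def ConvexPM {α : Type*} [MeasurableSpace α] (F : PM α → ℝ) : Prop :=
  ∀ (m m' : PM α) (a : ℝ), 0 ≤ a → a ≤ 1 →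
    F (convComb a m m') ≤ (1 - a) * F m + a * F m'

/-- Assumptions on the Gibbs potential `U`. -/
structure GibbsPotential {d : ℕ} (U : Rd d → ℝ) : Prop where
  smooth : ContDiff ℝ (⊤ : ℕ∞) U
  lipGrad : ∃ K : ℝ≥0, LipschitzWith K (fun x => gradient U x)
  diss : ∃ cU cU' : ℝ, 0 < cU ∧ ∀ x : Rd d, cU * ‖x‖ ^ 2 + cU' ≤ ⟪gradient U x, x⟫
  isDensity : ∫ x, Real.exp (-U x) = 1

/-- `ρ` is a density (w.r.t. Lebesgue) of the probability measure `m`, for which the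
relative entropy integrand `ρ log ρ + ρ U` (note `log (ρ/e^{-U}) = log ρ + U`) is integrable. -/
def EntPred {d : ℕ} (U : Rd d → ℝ) (m : PM (Rd d)) (ρ : Rd d → ℝ) : Prop :=
  Measurable ρ ∧ (∀ x, 0 ≤ ρ x) ∧
    (m : Measure (Rd d)) = (volume : Measure (Rd d)).withDensity (fun x => ENNReal.ofReal (ρ x)) ∧
    Integrable (fun x => ρ x * Real.log (ρ x) + ρ x * U x)

/-- The relative entropy `H(m) = ∫ m log (m / e^{-U})`, valued in `(-∞, ∞]`;
it equals `+∞` unless `m` is absolutely continuous with an integrable entropy integrand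
(for probability measures the negative part of the integrand is always integrable, so this
agrees with the usual convention). -/
def relEnt {d : ℕ} (U : Rd d → ℝ) (m : PM (Rd d)) : EReal :=
  letI : Decidable (∃ ρ, EntPred U m ρ) := Classical.propDecidable _
  if h : ∃ ρ, EntPred U m ρ then
    ((∫ x, (h.choose x * Real.log (h.choose x) + h.choose x * U x) : ℝ) : EReal)
  else ⊤

/-- The free energy `V^σ(m) = F(m) + (σ²/2) H(m)`, valued in `(-∞, ∞]`. -/
def freeEnergy {d : ℕ} (σ : ℝ) (U : Rd d → ℝ) (F : PM (Rd d) → ℝ) (m : PM (Rd d)) : EReal :=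
  (F m : EReal) + ((σ ^ 2 / 2 : ℝ) : EReal) * relEnt U m

/-- The 2-Wasserstein distance. -/
def W2 {α : Type*} [MeasurableSpace α] [NormedAddCommGroup α] (μ ν : PM α) : ℝ :=
  sInf { r : ℝ | ∃ cpl : Measure (α × α),
    cpl.map Prod.fst = (μ : Measure α) ∧ cpl.map Prod.snd = (ν : Measure α) ∧
    r = ((∫⁻ p, ENNReal.ofReal (‖p.1 - p.2‖ ^ 2) ∂cpl).toReal) ^ (1 / 2 : ℝ) }

/-- Divergence of a vector field on `ℝ^d`. -/
def diverg {d : ℕ} (v : Rd d → Rd d) (x : Rd d) : ℝ :=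
  LinearMap.trace ℝ (Rd d) (fderiv ℝ v x : Rd d →ₗ[ℝ] Rd d)
-- key pointwise Gibbs inequality: for t ≥ 0, s > 0: t - s ≤ t log t - t log s, eq iff t = s
lemma gibbs_ineq {t s : ℝ} (ht : 0 ≤ t) (hs : 0 < s) :
    t - s ≤ t * Real.log t - t * Real.log s := by
  rcases eq_or_lt_of_le ht with h | h
  · simp [← h]; positivity
  · have h1 : 1 - s / t ≤ Real.log (t / s) := by
      have := Real.add_one_le_exp (Real.log (s / t))
      rw [Real.exp_log (by positivity)] at this
      have hlog : Real.log (s / t) = - Real.log (t / s) := by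
        rw [← Real.log_inv]; congr 1; field_simp
      nlinarith [this, hlog]
    have h2 : Real.log (t / s) = Real.log t - Real.log s := Real.log_div (ne_of_gt h) (ne_of_gt hs)
    have := mul_le_mul_of_nonneg_left h1 (le_of_lt h)
    rw [h2] at this
    have hts : t * (1 - s / t) = t - s := by field_simp
    nlinarith

lemma gibbs_eq {t s : ℝ} (ht : 0 ≤ t) (hs : 0 < s)
    (h : t * Real.log t - t * Real.log s - t + s = 0) : t = s := by
  rcases eq_or_lt_of_le ht with h0 | h0
  · exfalso; rw [← h0] at h; simp at h; linarith
  · by_contra hne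
    have hts : t / s ≠ 1 := by
      intro hq; apply hne; field_simp at hq; linarith
    have hltt : Real.log (t/s) ≠ 0 := by
      intro h0'
      have : t / s = 1 := by
        have := Real.exp_log (show (0:ℝ) < t/s by positivity)
        rw [h0'] at this; simpa [Real.exp_zero] using this.symm
      exact hts this
    have := Real.add_one_lt_exp (x := Real.log (s/t)) (by
      intro h0'
      apply hltt
      have : Real.log (s/t) = - Real.log (t/s) := by
        rw [← Real.log_inv]; congr 1; field_simp
      rw [this] at h0'; linarith)
    rw [Real.exp_log (by positivity)] at this
    have hlog : Real.log (s / t) = Real.log s - Real.log t := Real.log_div (ne_of_gt hs) (ne_of_gt h0)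
    rw [hlog] at this
    -- this : log s - log t + 1 < s / t
    have := mul_lt_mul_of_pos_left this h0
    rw [mul_div_cancel₀] at this
    · nlinarith
    · exact ne_of_gt h0
section ConvCombLemmas
variable {α : Type*} [MeasurableSpace α]

lemma clamp_eq {t : ℝ} (h0 : 0 ≤ t) (h1 : t ≤ 1) : max 0 (min t 1) = t := by
  rw [min_eq_left h1, max_eq_right h0]

lemma convComb_coe {t : ℝ} (h0 : 0 ≤ t) (h1 : t ≤ 1) (μ ν : PM α) :
    (convComb t μ ν : Measure α)
      = (ENNReal.ofReal (1 - t)) • (μ : Measure α) + (ENNReal.ofReal t) • (ν : Measure α) := by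
  simp [convComb, clamp_eq h0 h1]

lemma convComb_zero (μ ν : PM α) : convComb 0 μ ν = μ := by
  apply Subtype.ext
  show (convComb 0 μ ν : Measure α) = (μ : Measure α)
  simp [convComb_coe le_rfl zero_le_one]

lemma integral_convComb {t : ℝ} (h0 : 0 ≤ t) (h1 : t ≤ 1) (μ ν : PM α) {f : α → ℝ}
    (hfμ : Integrable f (μ : Measure α)) (hfν : Integrable f (ν : Measure α)) :
    ∫ x, f x ∂(convComb t μ ν : Measure α) = (1 - t) * ∫ x, f x ∂(μ : Measure α)
      + t * ∫ x, f x ∂(ν : Measure α) := by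
  rw [convComb_coe h0 h1, integral_add_measure, integral_smul_measure, integral_smul_measure]
  · rw [ENNReal.toReal_ofReal (by linarith), ENNReal.toReal_ofReal h0]
    simp [smul_eq_mul]
  · exact hfμ.smul_measure (by simp)
  · exact hfν.smul_measure (by simp)

lemma convComb_convComb {s t : ℝ} (hs0 : 0 ≤ s) (hs1 : s ≤ 1) (ht0 : 0 ≤ t) (ht1 : t ≤ 1)
    (μ ν : PM α) : convComb s μ (convComb t μ ν) = convComb (s * t) μ ν := by
  apply Subtype.ext
  show (convComb s μ (convComb t μ ν) : Measure α) = (convComb (s*t) μ ν : Measure α)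
  rw [convComb_coe hs0 hs1, convComb_coe ht0 ht1,
    convComb_coe (mul_nonneg hs0 ht0) (by nlinarith)]
  rw [smul_add, smul_smul, smul_smul, ← ENNReal.ofReal_mul hs0, ← add_assoc, ← add_smul,
    ← ENNReal.ofReal_add (by linarith) (by nlinarith)]
  have h : 1 - s + s * (1 - t) = 1 - s * t := by ring
  rw [h, ENNReal.ofReal_mul hs0]

end ConvCombLemmas
section ContLemmas
variable {α : Type*} [MeasurableSpace α]

lemma convComb_clamp (t : ℝ) (μ ν : PM α) :
    convComb t μ ν = convComb (max 0 (min t 1)) μ ν := by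
  apply Subtype.ext
  show (convComb t μ ν : Measure α) = (convComb (max 0 (min t 1)) μ ν : Measure α)
  rw [convComb_coe (le_max_left _ _) (max_le zero_le_one (min_le_right _ _))]
  rfl

lemma integral_convComb' (t : ℝ) (μ ν : PM α) {f : α → ℝ}
    (hfμ : Integrable f (μ : Measure α)) (hfν : Integrable f (ν : Measure α)) :
    ∫ x, f x ∂(convComb t μ ν : Measure α)
      = (1 - max 0 (min t 1)) * ∫ x, f x ∂(μ : Measure α)
        + (max 0 (min t 1)) * ∫ x, f x ∂(ν : Measure α) := by
  rw [convComb_clamp, integral_convComb (le_max_left _ _)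
    (max_le zero_le_one (min_le_right _ _)) _ _ hfμ hfν]

lemma continuous_clamp : Continuous (fun t : ℝ => max 0 (min t 1)) :=
  continuous_const.max (continuous_id.min continuous_const)

end ContLemmas

lemma continuous_convComb {d : ℕ} (μ ν : PM (Rd d)) :
    Continuous (fun t : ℝ => convComb t μ ν) := by
  rw [continuous_iff_continuousAt]
  intro t
  unfold ContinuousAt
  rw [MeasureTheory.ProbabilityMeasure.tendsto_iff_forall_integral_tendsto]
  intro f
  have hint : ∀ s : ℝ, ∫ x, f x ∂(convComb s μ ν : Measure (Rd d))
      = (1 - max 0 (min s 1)) * ∫ x, f x ∂(μ : Measure (Rd d))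
        + (max 0 (min s 1)) * ∫ x, f x ∂(ν : Measure (Rd d)) := fun s =>
    integral_convComb' s μ ν (f.integrable _) (f.integrable _)
  simp only [hint]
  exact (((continuous_const.sub continuous_clamp).mul continuous_const).add
    (continuous_clamp.mul continuous_const)).tendsto t
section IntegrHelpers
variable {α : Type*} [MeasurableSpace α]

lemma integrable_of_bound {μ : Measure α} [IsFiniteMeasure μ] {f : α → ℝ} {C : ℝ}
    (hf : AEStronglyMeasurable f μ) (hC : ∀ x, |f x| ≤ C) : Integrable f μ :=
  Integrable.mono' (integrable_const C) hf (Filter.Eventually.of_forall hC)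

lemma withDensity_convComb {t : ℝ} (h0 : 0 ≤ t) (h1 : t ≤ 1) {m m' : PM α}
    {μ : Measure α} {ρ₁ ρ₂ : α → ℝ} (hρ₁ : Measurable ρ₁) (hρ₂ : Measurable ρ₂)
    (hρ₁0 : ∀ x, 0 ≤ ρ₁ x) (hρ₂0 : ∀ x, 0 ≤ ρ₂ x)
    (hm : (m : Measure α) = μ.withDensity (fun x => ENNReal.ofReal (ρ₁ x)))
    (hm' : (m' : Measure α) = μ.withDensity (fun x => ENNReal.ofReal (ρ₂ x))) :
    (convComb t m m' : Measure α)
      = μ.withDensity (fun x => ENNReal.ofReal ((1 - t) * ρ₁ x + t * ρ₂ x)) := by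
  rw [convComb_coe h0 h1, hm, hm', ← withDensity_smul' _ _ (by simp),
    ← withDensity_smul' _ _ (by simp), ← withDensity_add_left]
  · apply withDensity_congr_ae
    filter_upwards with x
    simp only [Pi.add_apply, Pi.smul_apply, smul_eq_mul]
    rw [ENNReal.ofReal_add (mul_nonneg (by linarith) (hρ₁0 x)) (mul_nonneg h0 (hρ₂0 x)),
      ENNReal.ofReal_mul (by linarith), ENNReal.ofReal_mul h0]
  · exact hρ₁.ennreal_ofReal.const_smul (ENNReal.ofReal (1-t))
end IntegrHelpers
lemma EntPred.ae_eq {d : ℕ} {U : Rd d → ℝ} {m : PM (Rd d)} {ρ ρ' : Rd d → ℝ}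
    (h : EntPred U m ρ) (h' : EntPred U m ρ') : ρ' =ᵐ[volume] ρ := by
  obtain ⟨hρm, hρ0, hρd, -⟩ := h
  obtain ⟨hρ'm, hρ'0, hρ'd, -⟩ := h'
  have heq : (volume : Measure (Rd d)).withDensity (fun x => ENNReal.ofReal (ρ' x))
      = (volume : Measure (Rd d)).withDensity (fun x => ENNReal.ofReal (ρ x)) := by
    rw [← hρd, ← hρ'd]
  have := (withDensity_eq_iff_of_sigmaFinite hρ'm.ennreal_ofReal.aemeasurable
    hρm.ennreal_ofReal.aemeasurable).mp heq
  filter_upwards [this] with x hx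
  exact (ENNReal.ofReal_eq_ofReal_iff (hρ'0 x) (hρ0 x)).mp hx

lemma relEnt_eq {d : ℕ} {U : Rd d → ℝ} {m : PM (Rd d)} {ρ : Rd d → ℝ}
    (h : EntPred U m ρ) :
    relEnt U m = ((∫ x, (ρ x * Real.log (ρ x) + ρ x * U x) : ℝ) : EReal) := by
  have hex : ∃ ρ', EntPred U m ρ' := ⟨ρ, h⟩
  rw [relEnt, dif_pos hex]
  congr 1
  apply integral_congr_ae
  filter_upwards [hex.choose_spec.ae_eq h] with x hx
  rw [hx]
section Gibbs
variable {d : ℕ} {U : Rd d → ℝ}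

lemma expU_integrable (hU : GibbsPotential U) :
    Integrable (fun x : Rd d => Real.exp (-U x)) := by
  by_contra h
  have := hU.isDensity
  rw [integral_undef h] at this
  norm_num at this

lemma lintegral_ofReal_eq_one {f : Rd d → ℝ} (hf : Integrable f (volume : Measure (Rd d)))
    (h0 : ∀ x, 0 ≤ f x) (h1 : ∫ x, f x = 1) :
    ∫⁻ x, ENNReal.ofReal (f x) = 1 := by
  rw [← MeasureTheory.ofReal_integral_eq_lintegral_ofReal hf
    (Filter.Eventually.of_forall h0), h1]
  norm_num

/-- The probability measure with density `f` (integrating to one). -/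
def densPM (f : Rd d → ℝ) (hf : Integrable f (volume : Measure (Rd d)))
    (h0 : ∀ x, 0 ≤ f x) (h1 : ∫ x, f x = 1) : PM (Rd d) :=
  ⟨(volume : Measure (Rd d)).withDensity (fun x => ENNReal.ofReal (f x)), by
    constructor
    rw [withDensity_apply _ MeasurableSet.univ]
    rw [setLIntegral_univ]
    exact lintegral_ofReal_eq_one hf h0 h1⟩

lemma densPM_coe {f : Rd d → ℝ} (hf : Integrable f (volume : Measure (Rd d)))
    (h0 : ∀ x, 0 ≤ f x) (h1 : ∫ x, f x = 1) :
    (densPM f hf h0 h1 : Measure (Rd d))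
      = (volume : Measure (Rd d)).withDensity (fun x => ENNReal.ofReal (f x)) := rfl

lemma entPred_gibbs (hU : GibbsPotential U) :
    EntPred U (densPM (fun x => Real.exp (-U x)) (expU_integrable hU)
      (fun x => (Real.exp_pos _).le) hU.isDensity) (fun x => Real.exp (-U x)) := by
  refine ⟨(hU.smooth.continuous.neg.rexp).measurable, fun x => (Real.exp_pos _).le, rfl, ?_⟩
  have : (fun x : Rd d => Real.exp (-U x) * Real.log (Real.exp (-U x))
      + Real.exp (-U x) * U x) = fun _ => 0 := by
    funext x; rw [Real.log_exp]; ring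
  rw [this]
  exact integrable_zero _ _ _

lemma relEnt_gibbs (hU : GibbsPotential U) :
    relEnt U (densPM (fun x => Real.exp (-U x)) (expU_integrable hU)
      (fun x => (Real.exp_pos _).le) hU.isDensity) = (0 : EReal) := by
  have h0 : (∫ x : Rd d, (Real.exp (-U x) * Real.log (Real.exp (-U x))
      + Real.exp (-U x) * U x)) = 0 := by
    have : (fun x : Rd d => Real.exp (-U x) * Real.log (Real.exp (-U x))
        + Real.exp (-U x) * U x) = fun _ => 0 := by
      funext x; rw [Real.log_exp]; ring
    rw [this, integral_zero]
  rw [relEnt_eq (entPred_gibbs hU), h0]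
  norm_num

lemma freeEnergy_of_entPred {σ : ℝ} {F : PM (Rd d) → ℝ} {m : PM (Rd d)} {ρ : Rd d → ℝ}
    (h : EntPred U m ρ) :
    freeEnergy σ U F m
      = ((F m + σ ^ 2 / 2 * ∫ x, (ρ x * Real.log (ρ x) + ρ x * U x) : ℝ) : EReal) := by
  rw [freeEnergy, relEnt_eq h, ← EReal.coe_mul, ← EReal.coe_add]

lemma freeEnergy_eq_top {σ : ℝ} (hσ : 0 < σ) {F : PM (Rd d) → ℝ} {m : PM (Rd d)}
    (h : ¬ ∃ ρ, EntPred U m ρ) : freeEnergy σ U F m = ⊤ := by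
  rw [freeEnergy, relEnt, dif_neg h, EReal.coe_mul_top_of_pos (by positivity),
    EReal.add_top_of_ne_bot (EReal.coe_ne_bot _)]

end Gibbs
section Squeeze
variable {α : Type*} [MeasurableSpace α] {μ : Measure α}

lemma integrable_of_squeeze {f g h : α → ℝ} (hf : AEStronglyMeasurable f μ)
    (h1 : ∀ x, g x ≤ f x) (h2 : ∀ x, f x ≤ h x)
    (hg : Integrable g μ) (hh : Integrable h μ) : Integrable f μ := by
  apply Integrable.mono' (hg.abs.add hh.abs) hf
  filter_upwards with x
  simp only [Pi.add_apply]
  rw [Real.norm_eq_abs, abs_le]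
  constructor
  · calc -(|g x| + |h x|) ≤ -|g x| := by nlinarith [abs_nonneg (h x)]
      _ ≤ g x := neg_abs_le _
      _ ≤ f x := h1 x
  · calc f x ≤ h x := h2 x
      _ ≤ |h x| := le_abs_self _
      _ ≤ |g x| + |h x| := by nlinarith [abs_nonneg (g x)]

lemma integrable_of_density {m : PM α} {ρ : α → ℝ} (hρ : Measurable ρ) (h0 : ∀ x, 0 ≤ ρ x)
    (hm : (m : Measure α) = μ.withDensity (fun x => ENNReal.ofReal (ρ x))) :
    Integrable ρ μ := by
  refine ⟨hρ.aestronglyMeasurable, ?_⟩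
  rw [hasFiniteIntegral_iff_ofReal (Filter.Eventually.of_forall h0)]
  have : ∫⁻ x, ENNReal.ofReal (ρ x) ∂μ = μ.withDensity (fun x => ENNReal.ofReal (ρ x)) Set.univ := by
    rw [withDensity_apply _ MeasurableSet.univ, setLIntegral_univ]
  rw [this, ← hm]
  simp

end Squeeze

section EntConv
variable {d : ℕ} {U : Rd d → ℝ}

/-- entropy integrand -/
def entI (U : Rd d → ℝ) (ρ : Rd d → ℝ) (x : Rd d) : ℝ := ρ x * Real.log (ρ x) + ρ x * U x

lemma entI_lb {ρ : Rd d → ℝ} (h0 : ∀ x, 0 ≤ ρ x) (x : Rd d) :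
    ρ x - Real.exp (-U x) ≤ entI U ρ x := by
  have := gibbs_ineq (h0 x) (Real.exp_pos (-U x))
  rw [Real.log_exp] at this
  unfold entI
  nlinarith

lemma mul_log_convex {a b t : ℝ} (ha : 0 ≤ a) (hb : 0 ≤ b) (h0 : 0 ≤ t) (h1 : t ≤ 1) :
    ((1-t)*a + t*b) * Real.log ((1-t)*a + t*b)
      ≤ (1-t) * (a * Real.log a) + t * (b * Real.log b) := by
  have := Real.convexOn_mul_log.2 (Set.mem_Ici.mpr ha) (Set.mem_Ici.mpr hb)
    (by linarith : (0:ℝ) ≤ 1 - t) h0 (by ring)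
  simpa [smul_eq_mul] using this

lemma entI_convex {ρ ρ' : Rd d → ℝ} (h0 : ∀ x, 0 ≤ ρ x) (h0' : ∀ x, 0 ≤ ρ' x)
    {t : ℝ} (ht0 : 0 ≤ t) (ht1 : t ≤ 1) (x : Rd d) :
    entI U (fun y => (1-t) * ρ y + t * ρ' y) x ≤ (1-t) * entI U ρ x + t * entI U ρ' x := by
  show ((1-t) * ρ x + t * ρ' x) * Real.log ((1-t) * ρ x + t * ρ' x)
      + ((1-t) * ρ x + t * ρ' x) * U x
    ≤ (1-t) * (ρ x * Real.log (ρ x) + ρ x * U x) + t * (ρ' x * Real.log (ρ' x) + ρ' x * U x)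
  have := mul_log_convex (h0 x) (h0' x) ht0 ht1
  nlinarith

lemma entPred_convComb (hU : GibbsPotential U) {m m' : PM (Rd d)} {ρ ρ' : Rd d → ℝ}
    (h : EntPred U m ρ) (h' : EntPred U m' ρ') {t : ℝ} (ht0 : 0 ≤ t) (ht1 : t ≤ 1) :
    EntPred U (convComb t m m') (fun y => (1-t) * ρ y + t * ρ' y) := by
  obtain ⟨hm1, hm2, hm3, hm4⟩ := h
  obtain ⟨hm1', hm2', hm3', hm4'⟩ := h'
  have hnn : ∀ x, 0 ≤ (1-t) * ρ x + t * ρ' x := fun x => by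
    have := hm2 x; have := hm2' x; nlinarith
  refine ⟨(hm1.const_mul _).add (hm1'.const_mul _), hnn,
    withDensity_convComb ht0 ht1 hm1 hm1' hm2 hm2' hm3 hm3', ?_⟩
  have hmeas : AEStronglyMeasurable (entI U (fun y => (1-t) * ρ y + t * ρ' y)) volume := by
    apply Measurable.aestronglyMeasurable
    apply Measurable.add
    · exact ((hm1.const_mul _).add (hm1'.const_mul _)).mul
        (((hm1.const_mul _).add (hm1'.const_mul _)).log)
    · exact ((hm1.const_mul _).add (hm1'.const_mul _)).mul hU.smooth.continuous.measurable
  apply integrable_of_squeeze hmeas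
    (fun x => entI_lb hnn x) (fun x => entI_convex hm2 hm2' ht0 ht1 x)
  · apply Integrable.sub _ (expU_integrable hU)
    exact ((integrable_of_density hm1 hm2 hm3).const_mul _).add
      ((integrable_of_density hm1' hm2' hm3').const_mul _)
  · exact (hm4.const_mul _).add (hm4'.const_mul _)

lemma entI_integral_convex (hU : GibbsPotential U) {m m' : PM (Rd d)} {ρ ρ' : Rd d → ℝ}
    (h : EntPred U m ρ) (h' : EntPred U m' ρ') {t : ℝ} (ht0 : 0 ≤ t) (ht1 : t ≤ 1) :
    ∫ x, entI U (fun y => (1-t) * ρ y + t * ρ' y) x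
      ≤ (1-t) * (∫ x, entI U ρ x) + t * ∫ x, entI U ρ' x := by
  have hint := (entPred_convComb hU h h' ht0 ht1).2.2.2
  have hIρ : Integrable (fun x => entI U ρ x) (volume : Measure (Rd d)) := h.2.2.2
  have hIρ' : Integrable (fun x => entI U ρ' x) (volume : Measure (Rd d)) := h'.2.2.2
  calc ∫ x, entI U (fun y => (1-t) * ρ y + t * ρ' y) x
      ≤ ∫ x, ((1-t) * entI U ρ x + t * entI U ρ' x) := by
        apply integral_mono hint ((hIρ.const_mul _).add (hIρ'.const_mul _))
        exact fun x => entI_convex h.2.1 h'.2.1 ht0 ht1 x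
    _ = (1-t) * (∫ x, entI U ρ x) + t * ∫ x, entI U ρ' x := by
        rw [integral_add (hIρ.const_mul _) (hIρ'.const_mul _),
          integral_const_mul, integral_const_mul]

end EntConv
section Deriv
variable {d : ℕ} {F : PM (Rd d) → ℝ} {DF : PM (Rd d) → Rd d → ℝ}

lemma DF_cont (hC1 : IsC1 F DF) (m : PM (Rd d)) : Continuous (DF m) :=
  hC1.cont.comp (Continuous.prodMk_right m)

lemma DF_integrable (hC1 : IsC1 F DF) (m m' : PM (Rd d)) :
    Integrable (DF m) (m' : Measure (Rd d)) := by
  obtain ⟨C, hC⟩ := hC1.bounded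
  exact integrable_of_bound (DF_cont hC1 m).aestronglyMeasurable (fun x => hC m x)

/-- The "directional derivative" integrand `φ`. -/
def phi (DF : PM (Rd d) → Rd d → ℝ) (μ ν : PM (Rd d)) (s : ℝ) : ℝ :=
  (∫ x, DF (convComb s μ ν) x ∂(ν : Measure (Rd d)))
    - ∫ x, DF (convComb s μ ν) x ∂(μ : Measure (Rd d))

lemma phi_continuous (hC1 : IsC1 F DF) (μ ν : PM (Rd d)) :
    Continuous (phi DF μ ν) := by
  obtain ⟨C, hC⟩ := hC1.bounded
  have hjoint : Continuous (fun p : ℝ × Rd d => DF (convComb p.1 μ ν) p.2) :=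
    hC1.cont.comp (((continuous_convComb μ ν).comp continuous_fst).prodMk continuous_snd)
  rw [continuous_iff_continuousAt]
  intro s₀
  apply ContinuousAt.sub
  all_goals {
    apply continuousAt_of_dominated (bound := fun _ => C)
    · filter_upwards with s
      exact ((DF_cont hC1 _)).aestronglyMeasurable
    · filter_upwards with s
      filter_upwards with x
      rw [Real.norm_eq_abs]
      exact hC _ x
    · exact integrable_const C
    · filter_upwards with x
      exact (hjoint.comp (continuous_id.prodMk continuous_const)).continuousAt
  }

lemma F_diff_eq (hC1 : IsC1 F DF) (μ ν : PM (Rd d)) {lam : ℝ} (h0 : 0 ≤ lam) (h1 : lam ≤ 1) :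
    F (convComb lam μ ν) - F μ = ∫ u in (0:ℝ)..lam, phi DF μ ν u := by
  rcases eq_or_lt_of_le h0 with rfl | hpos
  · rw [convComb_zero]
    simp
  rw [hC1.deriv_eq μ (convComb lam μ ν)]
  have key : ∀ s ∈ Set.uIcc (0:ℝ) 1,
      ((∫ x, DF (convComb s μ (convComb lam μ ν)) x ∂(convComb lam μ ν : Measure (Rd d)))
        - ∫ x, DF (convComb s μ (convComb lam μ ν)) x ∂(μ : Measure (Rd d)))
      = lam * phi DF μ ν (s * lam) := by
    intro s hs
    rw [Set.uIcc_of_le zero_le_one] at hs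
    obtain ⟨hs0, hs1⟩ := hs
    rw [convComb_convComb hs0 hs1 h0 h1]
    rw [integral_convComb h0 h1 _ _ (DF_integrable hC1 _ _) (DF_integrable hC1 _ _)]
    unfold phi
    ring
  rw [intervalIntegral.integral_congr key]
  rw [intervalIntegral.integral_const_mul]
  have := intervalIntegral.integral_comp_mul_right (a := (0:ℝ)) (b := 1)
    (fun u => phi DF μ ν u) (ne_of_gt hpos)
  rw [this]
  simp only [zero_mul, one_mul, smul_eq_mul]
  rw [← mul_assoc, mul_inv_cancel₀ (ne_of_gt hpos), one_mul]

lemma F_slope_tendsto (hC1 : IsC1 F DF) (μ ν : PM (Rd d)) :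
    Tendsto (fun lam => (F (convComb lam μ ν) - F μ) / lam) (𝓝[>] (0:ℝ))
      (𝓝 (phi DF μ ν 0)) := by
  have hcont := phi_continuous hC1 μ ν
  have hD : HasDerivAt (fun lam => ∫ u in (0:ℝ)..lam, phi DF μ ν u) (phi DF μ ν 0) 0 := by
    apply intervalIntegral.integral_hasDerivAt_right
    · exact hcont.intervalIntegrable 0 0
    · exact hcont.stronglyMeasurableAtFilter _ _
    · exact hcont.continuousAt
  have hslope := hasDerivAt_iff_tendsto_slope.mp hD
  have hmono : 𝓝[>] (0:ℝ) ≤ 𝓝[≠] (0:ℝ) :=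
    nhdsWithin_mono 0 (fun x hx => ne_of_gt hx)
  have h2 : Tendsto (fun lam => (∫ u in (0:ℝ)..lam, phi DF μ ν u) / lam) (𝓝[>] (0:ℝ))
      (𝓝 (phi DF μ ν 0)) := by
    apply Tendsto.congr' _ (hslope.mono_left hmono)
    filter_upwards [self_mem_nhdsWithin] with lam (hlam : 0 < lam)
    rw [slope_def_field]
    simp
  apply h2.congr'
  filter_upwards [Ioc_mem_nhdsGT_of_mem (Set.mem_Ico.mpr ⟨le_rfl, zero_lt_one⟩)]
    with lam hlam
  rw [F_diff_eq hC1 μ ν (le_of_lt hlam.1) hlam.2]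

end Deriv
section DensityInt
variable {d : ℕ}

lemma withDensity_ofReal_eq_nn {ρ : Rd d → ℝ} :
    (volume : Measure (Rd d)).withDensity (fun x => ENNReal.ofReal (ρ x))
      = (volume : Measure (Rd d)).withDensity (fun x => ((ρ x).toNNReal : ℝ≥0∞)) := rfl

lemma integral_density {m : PM (Rd d)} {ρ : Rd d → ℝ} (hρ : Measurable ρ)
    (h0 : ∀ x, 0 ≤ ρ x)
    (hm : (m : Measure (Rd d)) = (volume : Measure (Rd d)).withDensity
      (fun x => ENNReal.ofReal (ρ x))) (g : Rd d → ℝ) :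
    ∫ x, g x ∂(m : Measure (Rd d)) = ∫ x, ρ x * g x := by
  rw [hm, withDensity_ofReal_eq_nn,
    integral_withDensity_eq_integral_smul hρ.real_toNNReal g]
  congr 1
  funext x
  rw [NNReal.smul_def, smul_eq_mul, Real.coe_toNNReal _ (h0 x)]

lemma integral_density_one {m : PM (Rd d)} {ρ : Rd d → ℝ} (hρ : Measurable ρ)
    (h0 : ∀ x, 0 ≤ ρ x)
    (hm : (m : Measure (Rd d)) = (volume : Measure (Rd d)).withDensity
      (fun x => ENNReal.ofReal (ρ x))) :
    ∫ x, ρ x = 1 := by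
  have h1 : ∫⁻ x, ENNReal.ofReal (ρ x) = 1 := by
    have : (volume : Measure (Rd d)).withDensity (fun x => ENNReal.ofReal (ρ x)) Set.univ = 1 := by
      rw [← hm]; simp
    rwa [withDensity_apply _ MeasurableSet.univ, setLIntegral_univ] at this
  rw [integral_eq_lintegral_of_nonneg_ae (Filter.Eventually.of_forall h0)
    hρ.aestronglyMeasurable, h1]
  rfl

lemma integrable_bdd_mul {ρ f : Rd d → ℝ} {C : ℝ} (hρ : Integrable ρ (volume : Measure (Rd d)))
    (h0 : ∀ x, 0 ≤ ρ x) (hf : Measurable f) (hC : ∀ x, |f x| ≤ C) :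
    Integrable (fun x => ρ x * f x) (volume : Measure (Rd d)) := by
  apply Integrable.mono' (hρ.const_mul C) (hρ.1.aemeasurable.mul hf.aemeasurable).aestronglyMeasurable
  filter_upwards with x
  rw [Real.norm_eq_abs, Pi.mul_apply, abs_mul, abs_of_nonneg (h0 x)]
  calc ρ x * |f x| ≤ ρ x * C := by
        apply mul_le_mul_of_nonneg_left (hC x) (h0 x)
    _ = C * ρ x := by ring

end DensityInt
lemma key_ineq {d : ℕ} {F : PM (Rd d) → ℝ} {DF : PM (Rd d) → Rd d → ℝ} {U : Rd d → ℝ}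
    {σ : ℝ} (hσ : 0 < σ) (hU : GibbsPotential U) (hC1 : IsC1 F DF)
    {mstar ν : PM (Rd d)} {ρs ρν : Rd d → ℝ}
    (hs : EntPred U mstar ρs) (hν : EntPred U ν ρν)
    (hmin : ∀ m : PM (Rd d), freeEnergy σ U F mstar ≤ freeEnergy σ U F m) :
    0 ≤ (∫ x, DF mstar x ∂(ν : Measure (Rd d)))
        - (∫ x, DF mstar x ∂(mstar : Measure (Rd d)))
        + (σ^2/2) * ((∫ x, entI U ρν x) - ∫ x, entI U ρs x) := by
  set c := σ^2/2 with hc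
  have hcpos : 0 < c := by positivity
  set Hs := ∫ x, entI U ρs x with hHs
  set Hν := ∫ x, entI U ρν x with hHν
  have claim : ∀ lam : ℝ, lam ∈ Set.Ioc (0:ℝ) 1 →
      0 ≤ (F (convComb lam mstar ν) - F mstar)/lam + c * (Hν - Hs) := by
    intro lam hlam
    obtain ⟨hl0, hl1⟩ := hlam
    have hEnt := entPred_convComb hU hs hν (le_of_lt hl0) hl1
    have e1 : freeEnergy σ U F mstar = ((F mstar + c * Hs : ℝ) : EReal) :=
      freeEnergy_of_entPred hs
    have e2 : freeEnergy σ U F (convComb lam mstar ν)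
        = ((F (convComb lam mstar ν)
            + c * ∫ x, entI U (fun y => (1-lam) * ρs y + lam * ρν y) x : ℝ) : EReal) :=
      freeEnergy_of_entPred hEnt
    have hle := hmin (convComb lam mstar ν)
    rw [e1, e2, EReal.coe_le_coe_iff] at hle
    have hconv := entI_integral_convex hU hs hν (le_of_lt hl0) hl1
    rw [← hHs, ← hHν] at hconv
    have h3 : F mstar + c * Hs
        ≤ F (convComb lam mstar ν) + c * ((1-lam) * Hs + lam * Hν) := by
      calc F mstar + c * Hs ≤ _ := hle
        _ ≤ _ := by nlinarith
    have h4 : 0 ≤ (F (convComb lam mstar ν) - F mstar) + lam * (c * (Hν - Hs)) := by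
      nlinarith
    have h5 : (F (convComb lam mstar ν) - F mstar)
        = ((F (convComb lam mstar ν) - F mstar)/lam) * lam := by
      field_simp
    nlinarith [h5 ▸ h4]
  have htend : Tendsto (fun lam => (F (convComb lam mstar ν) - F mstar)/lam + c * (Hν - Hs))
      (𝓝[>] (0:ℝ)) (𝓝 (phi DF mstar ν 0 + c * (Hν - Hs))) :=
    (F_slope_tendsto hC1 mstar ν).add_const _
  have hfinal : 0 ≤ phi DF mstar ν 0 + c * (Hν - Hs) := by
    apply ge_of_tendsto htend
    filter_upwards [Ioc_mem_nhdsGT_of_mem (Set.mem_Ico.mpr ⟨le_rfl, zero_lt_one⟩)]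
      with lam hlam
    exact claim lam hlam
  have hphi : phi DF mstar ν 0 = (∫ x, DF mstar x ∂(ν : Measure (Rd d)))
      - ∫ x, DF mstar x ∂(mstar : Measure (Rd d)) := by
    unfold phi
    rw [convComb_zero]
  rw [hphi] at hfinal
  linarith
/-- **Gibbs form of the minimizer**: the minimizer `m*` of `V^σ` has density
`Z⁻¹ exp(-(2/σ²) (δF/δm)(m*,x) - U(x))` with `Z ∈ (0,∞)` the normalizing constant. -/
theorem minimizer_gibbs_form {d : ℕ}
    (F : PM (Rd d) → ℝ) (DF : PM (Rd d) → Rd d → ℝ) (U : Rd d → ℝ) (σ : ℝ) (hσ : 0 < σ)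
    (hU : GibbsPotential U) (hC1 : IsC1 F DF) (hConv : ConvexPM F)
    (hBddBelow : BddBelow (Set.range F))
    (mstar : PM (Rd d))
    (hmin : ∀ m : PM (Rd d), freeEnergy σ U F mstar ≤ freeEnergy σ U F m) :
    Integrable (fun y : Rd d => Real.exp (-(2 / σ ^ 2) * DF mstar y - U y)) ∧
    0 < ∫ y : Rd d, Real.exp (-(2 / σ ^ 2) * DF mstar y - U y) ∧
    (mstar : Measure (Rd d)) = (volume : Measure (Rd d)).withDensity fun x =>
      ENNReal.ofReal ((∫ y : Rd d, Real.exp (-(2 / σ ^ 2) * DF mstar y - U y))⁻¹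
        * Real.exp (-(2 / σ ^ 2) * DF mstar x - U x)) := by
  obtain ⟨C, hC⟩ := hC1.bounded
  have hUc : Continuous U := hU.smooth.continuous
  have hDFc : Continuous (DF mstar) := DF_cont hC1 mstar
  set β : ℝ := 2 / σ ^ 2 with hβ
  have hβpos : 0 < β := by positivity
  set ZI : Rd d → ℝ := fun y => Real.exp (-β * DF mstar y - U y) with hZI
  have hZIc : Continuous ZI := (((continuous_const.mul hDFc).sub hUc)).rexp
  have hZIpos : ∀ y, 0 < ZI y := fun y => Real.exp_pos _
  -- integrability of ZI
  have hZI_int : Integrable ZI (volume : Measure (Rd d)) := by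
    apply Integrable.mono' ((expU_integrable hU).const_mul (Real.exp (β * C)))
      hZIc.aestronglyMeasurable
    filter_upwards with y
    rw [Real.norm_eq_abs, abs_of_pos (hZIpos y), hZI]
    have h1 : -β * DF mstar y - U y ≤ β * C + -U y := by
      have := abs_le.mp (hC mstar y)
      nlinarith
    calc Real.exp (-β * DF mstar y - U y) ≤ Real.exp (β * C + -U y) := Real.exp_le_exp.mpr h1
      _ = Real.exp (β * C) * Real.exp (-U y) := Real.exp_add _ _
  set Z : ℝ := ∫ y, ZI y with hZdef
  have hZpos : 0 < Z := by
    rw [hZdef, integral_pos_iff_support_of_nonneg (fun y => (hZIpos y).le) hZI_int]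
    have : Function.support ZI = Set.univ := by
      ext y; simp [Function.support, (hZIpos y).ne']
    rw [this]
    exact isOpen_univ.measure_pos volume ⟨0, trivial⟩
  refine ⟨hZI_int, hZpos, ?_⟩
  -- m* has a finite-entropy density
  have hex : ∃ ρ, EntPred U mstar ρ := by
    by_contra h
    have h1 := hmin (densPM (fun x => Real.exp (-U x)) (expU_integrable hU)
      (fun x => (Real.exp_pos _).le) hU.isDensity)
    rw [freeEnergy_eq_top hσ h, freeEnergy, relEnt_gibbs hU] at h1
    simp only [mul_zero, add_zero, top_le_iff] at h1
    exact EReal.coe_ne_top _ h1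
  obtain ⟨ρs, hρs⟩ := hex
  have hρs_meas := hρs.1
  have hρs_nonneg := hρs.2.1
  have hρs_dens := hρs.2.2.1
  have hρs_entint : Integrable (fun x => entI U ρs x) (volume : Measure (Rd d)) := hρs.2.2.2
  have hρs_int : Integrable ρs (volume : Measure (Rd d)) :=
    integrable_of_density hρs_meas hρs_nonneg hρs_dens
  have hρs_one : ∫ x, ρs x = 1 := integral_density_one hρs_meas hρs_nonneg hρs_dens
  -- the Gibbs candidate measure ν
  set ρν : Rd d → ℝ := fun y => Z⁻¹ * ZI y with hρν
  have hρν_meas : Measurable ρν := (hZIc.measurable).const_mul _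
  have hρν_nonneg : ∀ y, 0 ≤ ρν y := fun y => by
    have := hZIpos y; positivity
  have hρν_pos : ∀ y, 0 < ρν y := fun y => by
    have := hZIpos y; positivity
  have hρν_int : Integrable ρν (volume : Measure (Rd d)) := hZI_int.const_mul _
  have hρν_one : ∫ y, ρν y = 1 := by
    rw [hρν]
    simp only
    rw [integral_const_mul, ← hZdef, inv_mul_cancel₀ hZpos.ne']
  set ν : PM (Rd d) := densPM ρν hρν_int hρν_nonneg hρν_one with hν
  have hν_dens : (ν : Measure (Rd d)) = (volume : Measure (Rd d)).withDensity
      (fun x => ENNReal.ofReal (ρν x)) := rfl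
  -- logarithm of the density
  have hlogρν : ∀ x, Real.log (ρν x) = -Real.log Z - β * DF mstar x - U x := by
    intro x
    rw [hρν]
    simp only
    rw [Real.log_mul (by positivity) (hZIpos x).ne', Real.log_inv, hZI]
    simp only
    rw [Real.log_exp]
    ring
  -- entropy integrand of ν
  have hentIν : (fun x => entI U ρν x)
      = fun x => -Real.log Z * ρν x - β * (ρν x * DF mstar x) := by
    funext x
    rw [entI, hlogρν x]
    ring
  have hρνDF_int : Integrable (fun x => ρν x * DF mstar x) (volume : Measure (Rd d)) :=
    integrable_bdd_mul hρν_int hρν_nonneg hDFc.measurable (fun x => hC mstar x)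
  have hρsDF_int : Integrable (fun x => ρs x * DF mstar x) (volume : Measure (Rd d)) :=
    integrable_bdd_mul hρs_int hρs_nonneg hDFc.measurable (fun x => hC mstar x)
  have hentIν_int : Integrable (fun x => entI U ρν x) (volume : Measure (Rd d)) := by
    rw [hentIν]
    exact (hρν_int.const_mul _).sub (hρνDF_int.const_mul _)
  have hν_pred : EntPred U ν ρν := ⟨hρν_meas, hρν_nonneg, hν_dens, hentIν_int⟩
  -- value of the entropy of ν
  have hHν : ∫ x, entI U ρν x = -Real.log Z - β * ∫ x, ρν x * DF mstar x := by
    have hA : Integrable (fun x => -Real.log Z * ρν x) (volume : Measure (Rd d)) :=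
      hρν_int.const_mul _
    have hB : Integrable (fun x => β * (ρν x * DF mstar x)) (volume : Measure (Rd d)) :=
      hρνDF_int.const_mul _
    rw [hentIν, integral_sub hA hB]
    have e1 : ∫ x, -Real.log Z * ρν x = -Real.log Z := by
      rw [integral_const_mul (-Real.log Z) ρν, hρν_one, mul_one]
    have e2 : ∫ x, β * (ρν x * DF mstar x) = β * ∫ x, ρν x * DF mstar x :=
      integral_const_mul β _
    rw [e1, e2]
  -- the first-order condition
  have key := key_ineq hσ hU hC1 hρs hν_pred hmin
  rw [integral_density hρν_meas hρν_nonneg hν_dens (DF mstar),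
    integral_density hρs_meas hρs_nonneg hρs_dens (DF mstar), hHν] at key
  set Iν := ∫ x, ρν x * DF mstar x
  set Is := ∫ x, ρs x * DF mstar x
  set Hs := ∫ x, entI U ρs x
  have hcβ : σ^2/2 * β = 1 := by
    rw [hβ]; field_simp
  have hkey2 : Hs + β * Is + Real.log Z ≤ 0 := by
    have h5 : β * (σ^2/2 * (-Real.log Z - β * Iν - Hs))
        = -Real.log Z - β * Iν - Hs := by
      rw [← mul_assoc, mul_comm β (σ^2/2), hcβ, one_mul]
    nlinarith [mul_nonneg hβpos.le key, h5]
  -- pointwise Gibbs functional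
  set G : Rd d → ℝ := fun x => entI U ρs x + β * (ρs x * DF mstar x)
    + Real.log Z * ρs x - ρs x + ρν x with hG
  have hG_eq : ∀ x, G x = ρs x * Real.log (ρs x) - ρs x * Real.log (ρν x) - ρs x + ρν x := by
    intro x
    rw [hG]
    simp only
    rw [entI, hlogρν x]
    ring
  have hG_nonneg : ∀ x, 0 ≤ G x := by
    intro x
    rw [hG_eq x]
    have := gibbs_ineq (hρs_nonneg x) (hρν_pos x)
    linarith
  have hG_int : Integrable G (volume : Measure (Rd d)) := by
    rw [hG]
    exact ((((hρs_entint.add (hρsDF_int.const_mul β)).add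
      (hρs_int.const_mul _)).sub hρs_int).add hρν_int)
  have hG_integral : ∫ x, G x = Hs + β * Is + Real.log Z := by
    have hA : Integrable (fun x => entI U ρs x + β * (ρs x * DF mstar x))
        (volume : Measure (Rd d)) := hρs_entint.add (hρsDF_int.const_mul β)
    have hB1 : Integrable (fun x => Real.log Z * ρs x - ρs x) (volume : Measure (Rd d)) :=
      (hρs_int.const_mul _).sub hρs_int
    have hB : Integrable (fun x => (Real.log Z * ρs x - ρs x) + ρν x)
        (volume : Measure (Rd d)) := hB1.add hρν_int
    have e0 : ∫ x, G x = ∫ x, ((entI U ρs x + β * (ρs x * DF mstar x))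
        + ((Real.log Z * ρs x - ρs x) + ρν x)) := by
      apply integral_congr_ae
      filter_upwards with x
      rw [hG]
      ring
    have e1 : ∫ x, (entI U ρs x + β * (ρs x * DF mstar x)) = Hs + β * Is := by
      rw [integral_add hρs_entint (hρsDF_int.const_mul β), integral_const_mul]
    have e2 : ∫ x, ((Real.log Z * ρs x - ρs x) + ρν x) = Real.log Z := by
      rw [integral_add hB1 hρν_int, integral_sub (hρs_int.const_mul _) hρs_int,
        integral_const_mul, hρs_one, hρν_one]
      ring
    rw [e0, integral_add hA hB, e1, e2]
  have hG_zero : ∫ x, G x = 0 :=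
    le_antisymm (hG_integral ▸ hkey2) (integral_nonneg hG_nonneg)
  have hae : ∀ᵐ x ∂(volume : Measure (Rd d)), G x = 0 :=
    (integral_eq_zero_iff_of_nonneg hG_nonneg hG_int).mp hG_zero
  have haeρ : ρs =ᵐ[volume] ρν := by
    filter_upwards [hae] with x hx
    apply gibbs_eq (hρs_nonneg x) (hρν_pos x)
    rw [hG_eq x] at hx
    linarith
  -- conclude
  rw [hρs_dens]
  apply withDensity_congr_ae
  filter_upwards [haeρ] with x hx
  rw [hx]

end
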